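/- Let n ≥ 1, σ > 0, and let Q be a compactly supported probability measure on ℝ^n. Define q_{σ²}(y) = (2πσ²)^{−n/2} ∫ exp(−‖y − μ‖²/(2σ²)) dQ(μ). Then q_{σ²} is everywhere positive and differentiable, and for all y ∈ ℝ^n, ∇ log q_{σ²}(y) = (1/σ²) · (f_{Q,σ²}(y) − y); equivalently, y + σ² ∇ log q_{σ²}(y) = f_{Q,σ²}(y). -/

import Mathlib

open MeasureTheory Real
open scoped ENNReal

/-- The Lebesgue density `q_{σ²}` of `Q * N(0, σ² I_n)`:
`q_{σ²}(y) = (2πσ²)^{-n/2} ∫ exp(-‖y − μ‖²/(2σ²)) dQ(μ)`. -/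
noncomputable def smoothedDensity (n : ℕ) (σ : ℝ) (Q : Measure (EuclideanSpace ℝ (Fin n)))
    (y : EuclideanSpace ℝ (Fin n)) : ℝ :=
  (2 * π * σ ^ 2) ^ (-(n : ℝ) / 2) * ∫ μ, Real.exp (-‖y - μ‖ ^ 2 / (2 * σ ^ 2)) ∂Q

/-- The tilted (posterior) mean `f_{Q,σ²}`. -/
noncomputable def tiltedMean (n : ℕ) (σ : ℝ) (Q : Measure (EuclideanSpace ℝ (Fin n)))
    (y : EuclideanSpace ℝ (Fin n)) : EuclideanSpace ℝ (Fin n) :=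
  (∫ μ, Real.exp ((inner ℝ y μ : ℝ) / σ ^ 2 - ‖μ‖ ^ 2 / (2 * σ ^ 2)) ∂Q)⁻¹ •
    ∫ μ, Real.exp ((inner ℝ y μ : ℝ) / σ ^ 2 - ‖μ‖ ^ 2 / (2 * σ ^ 2)) • μ ∂Q

set_option maxHeartbeats 1000000 in
/-- **Tweedie's formula.** For a compactly supported probability measure `Q` and `σ > 0`, the
density `q_{σ²}` is everywhere positive and differentiable, and
`∇ log q_{σ²}(y) = (1/σ²)(f_{Q,σ²}(y) − y)`. -/
theorem stmt16 (n : ℕ) (hn : 1 ≤ n) (σ : ℝ) (hσ : 0 < σ)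
    (Q : Measure (EuclideanSpace ℝ (Fin n))) [IsProbabilityMeasure Q]
    (hsupp : ∃ R : ℝ, Q (Metric.closedBall (0 : EuclideanSpace ℝ (Fin n)) R)ᶜ = 0) :
    (∀ y, 0 < smoothedDensity n σ Q y) ∧
    (∀ y, DifferentiableAt ℝ (smoothedDensity n σ Q) y) ∧
    (∀ y, gradient (fun z => Real.log (smoothedDensity n σ Q z)) y
        = (1 / σ ^ 2) • (tiltedMean n σ Q y - y)) := by
  classical
  obtain ⟨R₀, hR₀⟩ := hsupp
  set R : ℝ := max R₀ 0 with hRdef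
  have hR0 : 0 ≤ R := le_max_right _ _
  have hR : Q (Metric.closedBall (0 : EuclideanSpace ℝ (Fin n)) R)ᶜ = 0 := by
    refine le_antisymm (le_trans (measure_mono ?_) hR₀.le) zero_le
    exact Set.compl_subset_compl.mpr (Metric.closedBall_subset_closedBall (le_max_left _ _))
  have hae : ∀ᵐ μ ∂Q, ‖μ‖ ≤ R := by
    rw [ae_iff]
    convert hR using 2
    ext μ
    simp [Metric.mem_closedBall, dist_zero_right]
  have hσ2 : (0 : ℝ) < σ ^ 2 := by positivity
  set C : ℝ := (2 * π * σ ^ 2) ^ (-(n : ℝ) / 2) with hC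
  have hCpos : 0 < C := Real.rpow_pos_of_pos (by positivity) _
  set φ : EuclideanSpace ℝ (Fin n) → EuclideanSpace ℝ (Fin n) → ℝ := fun y μ => Real.exp (-‖y - μ‖ ^ 2 / (2 * σ ^ 2)) with hφ
  set g : EuclideanSpace ℝ (Fin n) → ℝ := fun y => ∫ μ, φ y μ ∂Q with hg
  have hcontφ : ∀ y : EuclideanSpace ℝ (Fin n), Continuous (fun μ => φ y μ) := by
    intro y
    exact Real.continuous_exp.comp
      ((((continuous_const.sub continuous_id).norm.pow 2).neg).div_const _)
  have hφ_le_one : ∀ (y μ : EuclideanSpace ℝ (Fin n)), φ y μ ≤ 1 := by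
    intro y μ
    apply Real.exp_le_one_iff.mpr
    exact div_nonpos_iff.mpr (Or.inr ⟨neg_nonpos.mpr (by positivity), by positivity⟩)
  have hφpos : ∀ (y μ : EuclideanSpace ℝ (Fin n)), 0 < φ y μ := fun y μ => Real.exp_pos _
  have hint : ∀ y : EuclideanSpace ℝ (Fin n), Integrable (fun μ => φ y μ) Q := by
    intro y
    refine Integrable.mono' (integrable_const 1) (hcontφ y).aestronglyMeasurable
      (Filter.Eventually.of_forall fun μ => ?_)
    rw [Real.norm_eq_abs, abs_of_pos (hφpos y μ)]
    exact hφ_le_one y μ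
  have hgpos : ∀ y : EuclideanSpace ℝ (Fin n), 0 < g y := by
    intro y
    have hle : ∀ᵐ μ ∂Q, Real.exp (-(‖y‖ + R) ^ 2 / (2 * σ ^ 2)) ≤ φ y μ := by
      refine hae.mono fun μ hμ => ?_
      apply Real.exp_le_exp.mpr
      rw [div_le_div_iff_of_pos_right (by positivity)]
      have h2 : ‖y - μ‖ ≤ ‖y‖ + R := (norm_sub_le _ _).trans (by linarith)
      nlinarith [norm_nonneg (y - μ)]
    have hmono := integral_mono_ae (integrable_const _) (hint y) hle
    rw [integral_const, probReal_univ, one_smul] at hmono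
    exact lt_of_lt_of_le (Real.exp_pos _) hmono
  -- derivative of the integrand
  set F' : EuclideanSpace ℝ (Fin n) → EuclideanSpace ℝ (Fin n) → (EuclideanSpace ℝ (Fin n) →L[ℝ] ℝ) := fun y μ => φ y μ • ((σ ^ 2)⁻¹ • innerSL ℝ (μ - y)) with hF'
  have hderiv : ∀ (μ y : EuclideanSpace ℝ (Fin n)), HasFDerivAt (fun z => φ z μ) (F' y μ) y := by
    intro μ y
    have h1 : HasFDerivAt (fun z : EuclideanSpace ℝ (Fin n) => ‖z - μ‖ ^ 2) ((2 : ℕ) • innerSL ℝ (y - μ)) y := by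
      simpa using ((hasFDerivAt_id y).sub_const μ).norm_sq
    have h2 : HasFDerivAt (fun z : EuclideanSpace ℝ (Fin n) => -‖z - μ‖ ^ 2 / (2 * σ ^ 2))
        ((-(2 * σ ^ 2)⁻¹) • ((2 : ℕ) • innerSL ℝ (y - μ))) y := by
      have := h1.const_mul (-(2 * σ ^ 2)⁻¹)
      convert this using 2 with z
      case e'_11 => ring
      all_goals rfl
    have h3 := (Real.hasDerivAt_exp (-‖y - μ‖ ^ 2 / (2 * σ ^ 2))).comp_hasFDerivAt y h2
    refine h3.congr_fderiv ?_
    symm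
    ext z
    simp only [hF', ContinuousLinearMap.coe_smul', Pi.smul_apply, innerSL_apply_apply, smul_eq_mul,
      ContinuousLinearMap.smul_apply, nsmul_eq_mul, Nat.cast_ofNat]
    rw [inner_sub_left, inner_sub_left]
    simp only [hφ]
    have : (0:ℝ) < σ ^ 2 := hσ2
    field_simp
    ring
  have hF'cont : ∀ y : EuclideanSpace ℝ (Fin n), Continuous (fun μ => F' y μ) := by
    intro y
    exact (hcontφ y).smul
      ((((innerSL ℝ (E := EuclideanSpace ℝ (Fin n))).continuous.comp (continuous_id.sub continuous_const))).const_smul (σ ^ 2)⁻¹)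
  have hbound : ∀ y : EuclideanSpace ℝ (Fin n), ∀ᵐ μ ∂Q, ∀ z ∈ Metric.ball y 1,
      ‖F' z μ‖ ≤ (σ ^ 2)⁻¹ * (R + (‖y‖ + 1)) := by
    intro y
    refine hae.mono fun μ hμ z hz => ?_
    have h1 : ‖μ - z‖ ≤ R + (‖y‖ + 1) := by
      have h0 := norm_sub_le μ z
      have h2 : ‖z‖ ≤ ‖y‖ + 1 := by
        have hz' : ‖z - y‖ < 1 := by simpa [dist_eq_norm] using hz
        have h3 : ‖z‖ ≤ ‖z - y‖ + ‖y‖ := by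
          simpa using norm_add_le (z - y) y
        linarith
      linarith
    refine ContinuousLinearMap.opNorm_le_bound _ (by positivity) fun x => ?_
    have hfx : F' z μ x = φ z μ * ((σ ^ 2)⁻¹ * (inner ℝ (μ - z) x : ℝ)) := rfl
    rw [hfx, Real.norm_eq_abs, abs_mul, abs_mul, abs_of_pos (hφpos z μ),
      abs_of_pos (inv_pos.mpr hσ2)]
    have hin : |(inner ℝ (μ - z) x : ℝ)| ≤ ‖μ - z‖ * ‖x‖ := abs_real_inner_le_norm _ _
    calc φ z μ * ((σ ^ 2)⁻¹ * |(inner ℝ (μ - z) x : ℝ)|)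
        ≤ 1 * ((σ ^ 2)⁻¹ * (‖μ - z‖ * ‖x‖)) := by
          refine mul_le_mul (hφ_le_one z μ) ?_ (by positivity) zero_le_one
          exact mul_le_mul_of_nonneg_left hin (inv_pos.mpr hσ2).le
      _ = (σ ^ 2)⁻¹ * ‖μ - z‖ * ‖x‖ := by ring
      _ ≤ (σ ^ 2)⁻¹ * (R + (‖y‖ + 1)) * ‖x‖ := by
          have := mul_le_mul_of_nonneg_left h1 (inv_pos.mpr hσ2).le
          exact mul_le_mul_of_nonneg_right this (norm_nonneg x)
  have hasF : ∀ y : EuclideanSpace ℝ (Fin n), HasFDerivAt g (∫ μ, F' y μ ∂Q) y := by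
    intro y
    exact hasFDerivAt_integral_of_dominated_of_fderiv_le (Metric.ball_mem_nhds y one_pos)
      (Filter.Eventually.of_forall fun z => (hcontφ z).aestronglyMeasurable)
      (hint y) (hF'cont y).aestronglyMeasurable (hbound y) (integrable_const _)
      (Filter.Eventually.of_forall fun μ z _ => hderiv μ z)
  -- vector field: gradient of g
  set vfun : EuclideanSpace ℝ (Fin n) → EuclideanSpace ℝ (Fin n) → EuclideanSpace ℝ (Fin n) := fun y μ => φ y μ • ((σ ^ 2)⁻¹ • (μ - y)) with hvfun
  have hvint : ∀ y : EuclideanSpace ℝ (Fin n), Integrable (vfun y) Q := by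
    intro y
    refine Integrable.mono' (integrable_const ((σ ^ 2)⁻¹ * (R + ‖y‖)))
      (Continuous.aestronglyMeasurable ?_) (hae.mono fun μ hμ => ?_)
    · exact (hcontφ y).smul ((continuous_id.sub continuous_const).const_smul (σ ^ 2)⁻¹)
    · simp only [hvfun]
      rw [norm_smul, norm_smul, Real.norm_eq_abs, Real.norm_eq_abs,
        abs_of_pos (hφpos y μ), abs_of_pos (inv_pos.mpr hσ2)]
      have h1 : ‖μ - y‖ ≤ R + ‖y‖ := (norm_sub_le _ _).trans (by linarith)
      have h3 : φ y μ ≤ 1 := hφ_le_one y μ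
      calc φ y μ * ((σ ^ 2)⁻¹ * ‖μ - y‖) ≤ 1 * ((σ ^ 2)⁻¹ * ‖μ - y‖) :=
            mul_le_mul_of_nonneg_right h3 (by positivity)
        _ = (σ ^ 2)⁻¹ * ‖μ - y‖ := one_mul _
        _ ≤ (σ ^ 2)⁻¹ * (R + ‖y‖) := mul_le_mul_of_nonneg_left h1 (inv_pos.mpr hσ2).le
  set G : EuclideanSpace ℝ (Fin n) → EuclideanSpace ℝ (Fin n) := fun y => ∫ μ, vfun y μ ∂Q with hG
  have hF'eq : ∀ (y μ : EuclideanSpace ℝ (Fin n)), F' y μ = innerSL ℝ (vfun y μ) := by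
    intro y μ
    ext z
    simp only [hF', hvfun, ContinuousLinearMap.smul_apply, innerSL_apply_apply, smul_eq_mul,
      inner_smul_left, RCLike.conj_to_real, map_inv₀]
  have hgrad_g : ∀ y : EuclideanSpace ℝ (Fin n), HasGradientAt g (G y) y := by
    intro y
    have h2 : ∫ μ, F' y μ ∂Q = innerSL ℝ (G y) := by
      calc ∫ μ, F' y μ ∂Q = ∫ μ, innerSL ℝ (vfun y μ) ∂Q := by
            simp only [hF'eq]
        _ = innerSL ℝ (G y) := ContinuousLinearMap.integral_comp_comm _ (hvint y)
    have h3 : HasFDerivAt g (innerSL ℝ (G y)) y := h2 ▸ hasF y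
    rw [hasGradientAt_iff_hasFDerivAt]
    exact h3
  have hsd : smoothedDensity n σ Q = fun y => C * g y := rfl
  have hsdpos : ∀ y : EuclideanSpace ℝ (Fin n), 0 < smoothedDensity n σ Q y := by
    intro y
    rw [hsd]
    exact mul_pos hCpos (hgpos y)
  have hgradsd : ∀ y : EuclideanSpace ℝ (Fin n), HasGradientAt (smoothedDensity n σ Q) (C • G y) y := by
    intro y
    rw [hasGradientAt_iff_hasFDerivAt, hsd]
    have h1 := ((hgrad_g y).hasFDerivAt).const_mul C
    have h2 : (InnerProductSpace.toDual ℝ (EuclideanSpace ℝ (Fin n))) (C • G y)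
        = C • (InnerProductSpace.toDual ℝ (EuclideanSpace ℝ (Fin n))) (G y) :=
      _root_.map_smul _ _ _
    rw [h2]
    exact h1
  refine ⟨hsdpos, fun y => (hgradsd y).hasFDerivAt.differentiableAt, ?_⟩
  intro y
  -- gradient of the log
  have hne : smoothedDensity n σ Q y ≠ 0 := (hsdpos y).ne'
  have hlog : HasGradientAt (fun z => Real.log (smoothedDensity n σ Q z))
      ((smoothedDensity n σ Q y)⁻¹ • (C • G y)) y := by
    rw [hasGradientAt_iff_hasFDerivAt]
    have h := (Real.hasDerivAt_log hne).comp_hasFDerivAt y (hgradsd y).hasFDerivAt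
    rw [_root_.map_smul]
    exact h
  rw [hlog.gradient]
  -- algebraic identification
  have hgy : g y ≠ 0 := (hgpos y).ne'
  have hstep1 : (smoothedDensity n σ Q y)⁻¹ • (C • G y) = (g y)⁻¹ • G y := by
    rw [hsd, smul_smul]
    congr 1
    rw [mul_inv]
    field_simp
  rw [hstep1]
  -- compute G y
  set I1 : EuclideanSpace ℝ (Fin n) := ∫ μ, φ y μ • μ ∂Q with hI1def
  have hI1int : Integrable (fun μ => φ y μ • μ) Q := by
    refine Integrable.mono' (integrable_const R)
      (Continuous.aestronglyMeasurable ((hcontφ y).smul continuous_id))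
      (hae.mono fun μ hμ => ?_)
    rw [norm_smul, Real.norm_eq_abs, abs_of_pos (hφpos y μ)]
    calc φ y μ * ‖μ‖ ≤ 1 * ‖μ‖ := mul_le_mul_of_nonneg_right (hφ_le_one y μ) (norm_nonneg _)
      _ = ‖μ‖ := one_mul _
      _ ≤ R := hμ
  have hGeq : G y = (σ ^ 2)⁻¹ • (I1 - g y • y) := by
    simp only [hG]
    have h1 : (fun μ => vfun y μ) = fun μ => (σ ^ 2)⁻¹ • (φ y μ • μ - φ y μ • y) := by
      funext μ
      simp only [hvfun]
      rw [smul_comm, smul_sub]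
    rw [h1, integral_smul]
    congr 1
    rw [integral_sub hI1int ((hint y).smul_const y), integral_smul_const]
  -- tilted mean identification
  set e : EuclideanSpace ℝ (Fin n) → ℝ := fun μ => Real.exp ((inner ℝ y μ : ℝ) / σ ^ 2 - ‖μ‖ ^ 2 / (2 * σ ^ 2)) with he
  set a : ℝ := Real.exp (-‖y‖ ^ 2 / (2 * σ ^ 2)) with ha
  have hapos : 0 < a := Real.exp_pos _
  have hkey : ∀ μ : EuclideanSpace ℝ (Fin n), φ y μ = a * e μ := by
    intro μ
    simp only [hφ, he, ha]
    rw [← Real.exp_add]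
    congr 1
    have hns : ‖y - μ‖ ^ 2 = ‖y‖ ^ 2 - 2 * (inner ℝ y μ : ℝ) + ‖μ‖ ^ 2 :=
      norm_sub_sq_real y μ
    rw [hns]
    field_simp
    ring
  have hgT : g y = a * ∫ μ, e μ ∂Q := by
    simp only [hg]
    rw [show (fun μ => φ y μ) = fun μ => a * e μ from funext hkey]
    exact integral_const_mul a e
  have hI1T : I1 = a • ∫ μ, e μ • μ ∂Q := by
    rw [hI1def]
    rw [show (fun μ => φ y μ • μ) = fun μ => a • (e μ • μ) from by
      funext μ; rw [hkey, mul_smul]]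
    exact integral_smul a _
  have htilt : (g y)⁻¹ • I1 = tiltedMean n σ Q y := by
    rw [hgT, hI1T, tiltedMean, smul_smul]
    rw [show (fun μ : EuclideanSpace ℝ (Fin n) =>
      Real.exp ((inner ℝ y μ : ℝ) / σ ^ 2 - ‖μ‖ ^ 2 / (2 * σ ^ 2))) = e from rfl]
    congr 1
    rw [mul_inv, mul_comm a⁻¹, mul_assoc, inv_mul_cancel₀ hapos.ne', mul_one]
  rw [hGeq, ← htilt, smul_comm, smul_sub, inv_smul_smul₀ hgy, one_div]
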